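/- arXiv:0812.0540 — 2 statements merged into one kernel-verified Lean document; each statement's English description precedes it below -/
import Mathlib

section
/- For every natural number n, the number of ordered pairs (x, y) of natural numbers with t_x + t_y = n equals d₁(4n+1) − d₃(4n+1), where d_i(m) denotes the number of positive divisors of m congruent to i modulo 4. -/
/-! `t_x + t_y = n` iff `(2x+1)² + (2y+1)² = 8n + 2`. Both squares in a representation of
`8n + 2` as a sum of two squares are odd, so the pairs `(x, y)`, each with its four choices of
signs, are exactly the Gaussian integers of norm `8n + 2`. Their number `r₂(8n+2) = r₂(4n+1)` is
given by Jacobi's two-square theorem `r₂(N) = 4 ∑_{d ∣ N} χ₄(d)`, proved by checking that both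
sides obey the same recursion at every prime `p`. On the Gaussian side the recursion comes from
how `p` factors in `ℤ[i]`: `2` is associate to `(1 + i)²`, `p ≡ 3 (mod 4)` stays prime, and
`p ≡ 1 (mod 4)` splits into non-associate primes `π π̄`, so inclusion–exclusion over divisibility
by `π` and `π̄` applies. -/

/-- The `k`-th triangular number. -/
def triangular (k : ℕ) : ℕ := k * (k + 1) / 2

/-- The number of positive divisors of `m` congruent to `i` modulo `4`. -/
def divCountMod4 (m i : ℕ) : ℕ := (m.divisors.filter (fun d => d % 4 = i)).card

open ArithmeticFunction ZMod
open scoped ArithmeticFunction.zeta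

local notation "ℤ[i]" => GaussianInt

instance {d : ℤ} : IsLocalHom (Zsqrtd.normMonoidHom (d := d)) :=
  ⟨fun z => (Zsqrtd.isUnit_iff_norm_isUnit z).mpr⟩

noncomputable def chi4 : ArithmeticFunction ℤ := ⟨fun n => χ₄ n, by simp⟩

theorem isMultiplicative_chi4 : chi4.IsMultiplicative :=
  ⟨by simp [chi4], fun _ => by simp only [chi4, coe_mk, Nat.cast_mul, map_mul]⟩

noncomputable def chi4DivisorSum : ArithmeticFunction ℤ := chi4 * ζ

theorem chi4DivisorSum_apply (N : ℕ) : chi4DivisorSum N = ∑ d ∈ N.divisors, χ₄ d :=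
  coe_mul_zeta_apply

theorem isMultiplicative_chi4DivisorSum : chi4DivisorSum.IsMultiplicative :=
  isMultiplicative_chi4.mul isMultiplicative_zeta.natCast

theorem chi4DivisorSum_prime_pow_succ {p : ℕ} (hp : p.Prime) (k : ℕ) :
    chi4DivisorSum (p ^ (k + 1)) = 1 + χ₄ p * chi4DivisorSum (p ^ k) := by
  rw [chi4DivisorSum_apply, chi4DivisorSum_apply, Nat.sum_divisors_prime_pow hp,
    Nat.sum_divisors_prime_pow hp, Finset.sum_range_succ', Finset.mul_sum]
  simp only [pow_succ', pow_zero, Nat.cast_mul, Nat.cast_one, map_mul, map_one]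
  ring

theorem chi4DivisorSum_prime_mul {p M : ℕ} (hp : p.Prime) (hpM : ¬p ∣ M) :
    chi4DivisorSum (p * M) = (1 + χ₄ p) * chi4DivisorSum M := by
  have hSp : chi4DivisorSum p = 1 + χ₄ p := by
    simpa [isMultiplicative_chi4DivisorSum.map_one] using chi4DivisorSum_prime_pow_succ hp 0
  rw [isMultiplicative_chi4DivisorSum.map_mul_of_coprime
    ((Nat.Prime.coprime_iff_not_dvd hp).mpr hpM), hSp]

theorem chi4DivisorSum_prime_sq_mul {p : ℕ} (hp : p.Prime) (M : ℕ) :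
    chi4DivisorSum (p ^ 2 * M) + χ₄ p * chi4DivisorSum M =
      (1 + χ₄ p) * chi4DivisorSum (p * M) := by
  rcases eq_or_ne M 0 with rfl | hM
  · simp
  obtain ⟨k, m, hpm, rfl⟩ := Nat.exists_eq_pow_mul_and_not_dvd hM p hp.ne_one
  have hS (j : ℕ) : chi4DivisorSum (p ^ j * (p ^ k * m)) =
      chi4DivisorSum (p ^ (j + k)) * chi4DivisorSum m := by
    rw [← mul_assoc, ← pow_add, isMultiplicative_chi4DivisorSum.map_mul_of_coprime
      (Nat.Coprime.pow_left _ ((Nat.Prime.coprime_iff_not_dvd hp).mpr hpm))]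
  have h0 := hS 0
  have h1 := hS 1
  simp only [pow_zero, pow_one, one_mul, zero_add] at h0 h1
  rw [hS 2, h1, h0, add_comm 2 k, add_comm 1 k, chi4DivisorSum_prime_pow_succ hp (k + 1),
    chi4DivisorSum_prime_pow_succ hp k]
  ring

theorem chi4DivisorSum_eq_divCountMod4_sub (N : ℕ) :
    chi4DivisorSum N = divCountMod4 N 1 - divCountMod4 N 3 := by
  rw [chi4DivisorSum_apply, divCountMod4, divCountMod4, Finset.card_filter, Finset.card_filter]
  push_cast
  rw [← Finset.sum_sub_distrib]
  refine Finset.sum_congr rfl fun d _ => ?_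
  rw [χ₄_nat_mod_four]
  have : d % 4 < 4 := Nat.mod_lt d (by norm_num)
  interval_cases d % 4 <;> rfl

/-- The recursions at a prime `p` satisfied by the coefficients of `ζ(s) L(s, χ₄)`, whose Euler
factor at `p` is `1 / ((1 - p⁻ˢ) (1 - χ₄(p) p⁻ˢ))`. -/
structure Chi4Recursion (f : ℕ → ℤ) : Prop where
  prime_mul {p M : ℕ} : p.Prime → ¬p ∣ M → f (p * M) = (1 + χ₄ p) * f M
  prime_sq_mul {p : ℕ} (M : ℕ) : p.Prime →
    f (p ^ 2 * M) + χ₄ p * f M = (1 + χ₄ p) * f (p * M)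

namespace Chi4Recursion

theorem const_mul {f : ℕ → ℤ} (hf : Chi4Recursion f) (c : ℤ) :
    Chi4Recursion (c * f ·) where
  prime_mul hp hpM := by rw [hf.prime_mul hp hpM]; ring
  prime_sq_mul M hp := by linear_combination c * hf.prime_sq_mul M hp

theorem eq_of_apply_one_eq {f g : ℕ → ℤ} (hf : Chi4Recursion f) (hg : Chi4Recursion g)
    (h1 : f 1 = g 1) {N : ℕ} (hN : N ≠ 0) : f N = g N := by
  induction N using Nat.strong_induction_on with
  | _ N ih =>
  rcases eq_or_ne N 1 with rfl | hN1
  · exact h1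
  set p := N.minFac
  have hp : p.Prime := Nat.minFac_prime hN1
  obtain ⟨M, hNM⟩ : p ∣ N := Nat.minFac_dvd N
  have hM : M ≠ 0 := right_ne_zero_of_mul (hNM ▸ hN)
  have hMlt : M < N := hNM ▸ (Nat.lt_mul_iff_one_lt_left (Nat.pos_of_ne_zero hM)).mpr hp.one_lt
  by_cases hpM : p ∣ M
  · obtain ⟨M', rfl⟩ := hpM
    have hM' : M' ≠ 0 := right_ne_zero_of_mul hM
    have hM'lt : M' < p * M' := (Nat.lt_mul_iff_one_lt_left (Nat.pos_of_ne_zero hM')).mpr hp.one_lt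
    have hf2 := hf.prime_sq_mul M' hp
    have hg2 := hg.prime_sq_mul M' hp
    rw [ih _ hMlt hM, ih _ (hM'lt.trans hMlt) hM'] at hf2
    rw [hNM, ← mul_assoc, ← sq]
    linear_combination hf2 - hg2
  · rw [hNM, hf.prime_mul hp hpM, hg.prime_mul hp hpM, ih M hMlt hM]

end Chi4Recursion

theorem chi4Recursion_chi4DivisorSum : Chi4Recursion (chi4DivisorSum ·) where
  prime_mul := chi4DivisorSum_prime_mul
  prime_sq_mul M hp := chi4DivisorSum_prime_sq_mul hp M

theorem two_mul_triangular (k : ℕ) : 2 * triangular k = k * (k + 1) :=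
  Nat.mul_div_cancel' (Nat.even_mul_succ_self k).two_dvd

def signedOdd (s : Bool) (x : ℕ) : ℤ := if s then -(2 * x + 1) else 2 * x + 1

theorem signedOdd_sq (s : Bool) (x : ℕ) : signedOdd s x ^ 2 = 8 * triangular x + 1 := by
  have h : (2 * triangular x : ℤ) = x * (x + 1) := by exact_mod_cast two_mul_triangular x
  cases s <;> simp only [signedOdd, Bool.false_eq_true, if_true, if_false] <;>
    linear_combination -4 * h

theorem signedOdd_inj {s t : Bool} {x y : ℕ} :
    signedOdd s x = signedOdd t y ↔ s = t ∧ x = y := by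
  cases s <;> cases t <;> simp [signedOdd] <;> omega

theorem exists_signedOdd_eq {a : ℤ} (ha : Odd a) : ∃ s x, signedOdd s x = a := by
  obtain ⟨k, rfl⟩ := ha
  rcases le_or_gt 0 k with hk | hk
  · exact ⟨false, k.toNat, by simp only [signedOdd, Bool.false_eq_true, if_false]; omega⟩
  · exact ⟨true, (-k - 1).toNat, by simp only [signedOdd, if_true]; omega⟩

namespace GaussianInt

theorem norm_eq_sq_add_sq (z : ℤ[i]) : z.norm = z.re ^ 2 + z.im ^ 2 := by
  rw [Zsqrtd.norm_def]; ring

theorem finite_setOf_norm_eq (N : ℤ) : {z : ℤ[i] | z.norm = N}.Finite := by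
  refine (((Set.finite_Icc (-N) N).prod (Set.finite_Icc (-N) N)).image
    fun p : ℤ × ℤ => (⟨p.1, p.2⟩ : ℤ[i])).subset fun z hz => ⟨(z.re, z.im), ?_, rfl⟩
  have hz : z.re ^ 2 + z.im ^ 2 = N := by rw [← norm_eq_sq_add_sq]; exact hz
  have := Int.natAbs_le_self_sq z.re
  have := Int.natAbs_le_self_sq z.im
  simp only [Set.mem_prod, Set.mem_Icc]
  omega

theorem prime_of_prime_norm {π : ℤ[i]} (h : Prime π.norm) : Prime π :=
  (Irreducible.of_map (f := Zsqrtd.normMonoidHom) h.irreducible).prime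

theorem dvd_or_star_dvd_of_dvd_norm {π z : ℤ[i]} (hπ : Prime π)
    (h : π ∣ (z.norm : ℤ[i])) : π ∣ z ∨ star π ∣ z := by
  rw [Zsqrtd.norm_eq_mul_conj] at h
  refine (hπ.dvd_mul.mp h).imp id fun ⟨w, hw⟩ => ⟨star w, ?_⟩
  rw [← star_star z, hw, star_mul']

theorem dvd_of_dvd_norm {π z : ℤ[i]} (hπ : Prime π) (hstar : π ∣ star π)
    (h : π ∣ (z.norm : ℤ[i])) : π ∣ z :=
  (dvd_or_star_dvd_of_dvd_norm hπ h).elim id hstar.trans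

/-- `r₂(N)`, the number of representations of `N` as a sum of two squares. -/
noncomputable def normCount (N : ℕ) : ℕ := {z : ℤ[i] | z.norm = N}.ncard

theorem ncard_setOf_norm_eq_and_dvd {c : ℤ[i]} (hc : c ≠ 0) {N : ℕ} (M : ℕ)
    (h : (N : ℤ) = c.norm * M) : {z : ℤ[i] | z.norm = N ∧ c ∣ z}.ncard = normCount M := by
  have hc' : c.norm ≠ 0 := fun h0 => hc ((Zsqrtd.norm_eq_zero_iff (by norm_num) c).mp h0)
  have : {z : ℤ[i] | z.norm = N ∧ c ∣ z} = (c * ·) '' {w | w.norm = M} := by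
    ext z
    constructor
    · rintro ⟨hz, w, rfl⟩
      rw [Zsqrtd.norm_mul, h] at hz
      exact ⟨w, mul_left_cancel₀ hc' hz, rfl⟩
    · rintro ⟨w, hw, rfl⟩
      exact ⟨by rw [Zsqrtd.norm_mul, hw, h], dvd_mul_right c w⟩
  rw [this, Set.ncard_image_of_injective _ (mul_right_injective₀ hc), normCount]

theorem normCount_eq_ncard_dvd {c : ℤ[i]} {N : ℕ} (h : ∀ z : ℤ[i], z.norm = N → c ∣ z) :
    normCount N = {z : ℤ[i] | z.norm = N ∧ c ∣ z}.ncard := by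
  rw [normCount]
  congr 1
  ext z
  exact ⟨fun hz => ⟨hz, h z hz⟩, And.left⟩

theorem setOf_norm_eq_mul_and_dvd_eq_empty {p M : ℕ} (hp : p ≠ 0) (hpM : ¬p ∣ M) :
    {z : ℤ[i] | z.norm = (p * M : ℕ) ∧ (p : ℤ[i]) ∣ z} = ∅ := by
  refine Set.eq_empty_of_forall_notMem ?_
  rintro z ⟨hz, w, rfl⟩
  rw [Zsqrtd.norm_mul, Zsqrtd.norm_natCast, Nat.cast_mul, mul_assoc] at hz
  exact hpM <| Int.natCast_dvd_natCast.mp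
    ⟨w.norm, (mul_left_cancel₀ (by exact_mod_cast hp) hz).symm⟩

theorem not_dvd_star_of_prime_norm {π : ℤ[i]} (hπ : Prime π.norm) (h2 : ¬π.norm ∣ 2) :
    ¬π ∣ star π := by
  intro h
  have dvd_of_dvd_sq : ∀ x : ℤ, π.norm ∣ (2 * x) ^ 2 → π.norm ∣ x := fun x hx =>
    (hπ.dvd_mul.mp (hπ.dvd_of_dvd_pow hx)).resolve_left h2
  have norm_dvd : ∀ {x : ℤ[i]}, π ∣ x → π.norm ∣ x.norm := map_dvd Zsqrtd.normMonoidHom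
  obtain ⟨a, ha⟩ := dvd_of_dvd_sq π.re <| by
    convert norm_dvd (dvd_add dvd_rfl h) using 1
    simp [norm_eq_sq_add_sq]; ring
  obtain ⟨b, hb⟩ := dvd_of_dvd_sq π.im <| by
    convert norm_dvd (dvd_sub dvd_rfl h) using 1
    simp [norm_eq_sq_add_sq]; ring
  have hnorm := norm_eq_sq_add_sq π
  rw [ha, hb] at hnorm
  refine hπ.not_isUnit (isUnit_of_dvd_one ⟨a ^ 2 + b ^ 2, mul_left_cancel₀ hπ.ne_zero ?_⟩)
  linear_combination hnorm

theorem setOf_norm_eq_eq_union {π : ℤ[i]} (hπ : Prime π) {N : ℕ} (hN : π.norm ∣ N) :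
    {z : ℤ[i] | z.norm = N} =
      {z : ℤ[i] | z.norm = N ∧ π ∣ z} ∪ {z : ℤ[i] | z.norm = N ∧ star π ∣ z} := by
  ext z
  refine ⟨fun hz => (dvd_or_star_dvd_of_dvd_norm hπ ?_).imp (⟨hz, ·⟩) (⟨hz, ·⟩),
    fun h => h.elim And.left And.left⟩
  rw [hz.out]
  exact (Zsqrtd.norm_eq_mul_conj π ▸ dvd_mul_right π (star π)).trans (Int.cast_dvd_cast _ _ hN)

theorem setOf_norm_eq_and_dvd_inter {π : ℤ[i]} (hπ : IsCoprime π (star π)) (N : ℕ) :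
    {z : ℤ[i] | z.norm = N ∧ π ∣ z} ∩ {z : ℤ[i] | z.norm = N ∧ star π ∣ z} =
      {z : ℤ[i] | z.norm = N ∧ (π.norm : ℤ[i]) ∣ z} := by
  ext z
  simp only [Set.mem_inter_iff, Set.mem_ofPred_eq, Zsqrtd.norm_eq_mul_conj]
  exact ⟨fun ⟨⟨hz, h⟩, _, h'⟩ => ⟨hz, hπ.mul_dvd h h'⟩,
    fun ⟨hz, h⟩ =>
      ⟨⟨hz, (dvd_mul_right _ _).trans h⟩, hz, (dvd_mul_left _ _).trans h⟩⟩

theorem normCount_two_mul (M : ℕ) : normCount (2 * M) = normCount M := by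
  let ω : ℤ[i] := ⟨1, 1⟩
  have hω : ω.norm = 2 := rfl
  have hωp : Prime ω := prime_of_prime_norm (hω ▸ Int.prime_two)
  rw [normCount_eq_ncard_dvd (c := ω),
    ncard_setOf_norm_eq_and_dvd (by decide) M (by rw [hω]; push_cast; ring)]
  intro z hz
  -- `1 - i = (1 + i) * (-i)`
  refine dvd_of_dvd_norm hωp ⟨⟨0, -1⟩, rfl⟩ ⟨star ω * M, ?_⟩
  rw [hz, ← mul_assoc, ← Zsqrtd.norm_eq_mul_conj, hω]
  push_cast; ring

theorem natCast_dvd_of_dvd_norm {p : ℕ} (hp : p.Prime) (h3 : p % 4 = 3) {z : ℤ[i]}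
    (hz : (p : ℤ) ∣ z.norm) : (p : ℤ[i]) ∣ z := by
  have := Fact.mk hp
  refine dvd_of_dvd_norm ((prime_iff_mod_four_eq_three_of_nat_prime p).mpr h3)
    (by rw [star_natCast]) ?_
  simpa using Int.cast_dvd_cast (α := ℤ[i]) _ _ hz

theorem normCount_prime_mul_of_mod_four_eq_three {p M : ℕ} (hp : p.Prime) (h3 : p % 4 = 3)
    (hpM : ¬p ∣ M) : normCount (p * M) = 0 := by
  rw [normCount_eq_ncard_dvd fun z hz =>
      natCast_dvd_of_dvd_norm hp h3 ⟨M, by rw [hz]; push_cast; ring⟩,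
    setOf_norm_eq_mul_and_dvd_eq_empty hp.ne_zero hpM, Set.ncard_empty]

theorem normCount_prime_sq_mul_of_mod_four_eq_three {p M : ℕ} (hp : p.Prime) (h3 : p % 4 = 3) :
    normCount (p ^ 2 * M) = normCount M := by
  rw [normCount_eq_ncard_dvd fun z hz =>
      natCast_dvd_of_dvd_norm hp h3 ⟨p * M, by rw [hz]; push_cast; ring⟩,
    ncard_setOf_norm_eq_and_dvd (by exact_mod_cast hp.ne_zero) M
      (by rw [Zsqrtd.norm_natCast]; push_cast; ring)]

theorem normCount_prime_mul_add_ncard {p : ℕ} (hp : p.Prime) (h1 : p % 4 = 1) (M : ℕ) :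
    normCount (p * M) + {z : ℤ[i] | z.norm = (p * M : ℕ) ∧ (p : ℤ[i]) ∣ z}.ncard =
      2 * normCount M := by
  have := Fact.mk hp
  obtain ⟨a, b, hab⟩ := Nat.Prime.sq_add_sq (p := p) (by omega)
  let π : ℤ[i] := ⟨a, b⟩
  have hπ : π.norm = p := by
    rw [norm_eq_sq_add_sq, ← hab]; push_cast; rfl
  have hπ' : (star π).norm = p := by rw [Zsqrtd.norm_conj, hπ]
  have hpZ : Prime (p : ℤ) := Nat.prime_iff_prime_int.mp hp
  have hπp : Prime π := prime_of_prime_norm (hπ ▸ hpZ)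
  have hp2 : ¬(p : ℤ) ∣ 2 := fun h => by
    have := Nat.le_of_dvd two_pos (Int.natCast_dvd_natCast.mp h)
    have := hp.two_le
    omega
  have hcop : IsCoprime π (star π) :=
    hπp.coprime_iff_not_dvd.mpr (not_dvd_star_of_prime_norm (hπ ▸ hpZ) (hπ ▸ hp2))
  have hfin (c : ℤ[i]) : {z : ℤ[i] | z.norm = (p * M : ℕ) ∧ c ∣ z}.Finite :=
    (finite_setOf_norm_eq _).subset fun z hz => hz.1
  have h := Set.ncard_union_add_ncard_inter _ _ (hfin π) (hfin (star π))
  rw [← setOf_norm_eq_eq_union hπp (by rw [hπ]; push_cast; exact dvd_mul_right _ _),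
    setOf_norm_eq_and_dvd_inter hcop, hπ, Int.cast_natCast,
    ncard_setOf_norm_eq_and_dvd hπp.ne_zero M (by rw [hπ]; push_cast; ring),
    ncard_setOf_norm_eq_and_dvd (star_ne_zero.mpr hπp.ne_zero) M
      (by rw [hπ']; push_cast; ring)] at h
  rw [normCount, h, two_mul]

theorem normCount_prime_mul_of_mod_four_eq_one {p M : ℕ} (hp : p.Prime) (h1 : p % 4 = 1)
    (hpM : ¬p ∣ M) : normCount (p * M) = 2 * normCount M := by
  have h := normCount_prime_mul_add_ncard hp h1 M
  rwa [setOf_norm_eq_mul_and_dvd_eq_empty hp.ne_zero hpM, Set.ncard_empty, add_zero] at h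

theorem normCount_prime_sq_mul_of_mod_four_eq_one {p : ℕ} (hp : p.Prime) (h1 : p % 4 = 1)
    (M : ℕ) : normCount (p ^ 2 * M) + normCount M = 2 * normCount (p * M) := by
  have h := normCount_prime_mul_add_ncard hp h1 (p * M)
  rwa [← mul_assoc, ← sq, ncard_setOf_norm_eq_and_dvd (by exact_mod_cast hp.ne_zero) M
    (by rw [Zsqrtd.norm_natCast]; push_cast; ring)] at h

theorem chi4Recursion_normCount : Chi4Recursion (fun N => (normCount N : ℤ)) where
  prime_mul {p M} hp hpM := by
    rcases hp.eq_two_or_odd with rfl | hodd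
    · simp [normCount_two_mul]
    rcases Nat.odd_mod_four_iff.mp hodd with h1 | h3
    · rw [normCount_prime_mul_of_mod_four_eq_one hp h1 hpM, χ₄_nat_one_mod_four h1]
      push_cast; ring
    · simp [normCount_prime_mul_of_mod_four_eq_three hp h3 hpM, χ₄_nat_three_mod_four h3]
  prime_sq_mul {p} M hp := by
    rcases hp.eq_two_or_odd with rfl | hodd
    · rw [sq, mul_assoc, normCount_two_mul, normCount_two_mul]
      simp
    rcases Nat.odd_mod_four_iff.mp hodd with h1 | h3
    · have h := normCount_prime_sq_mul_of_mod_four_eq_one hp h1 M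
      zify at h
      rw [χ₄_nat_one_mod_four h1]
      linear_combination h
    · simp [normCount_prime_sq_mul_of_mod_four_eq_three hp h3, χ₄_nat_three_mod_four h3]

theorem normCount_one : normCount 1 = 4 := by
  have : {z : ℤ[i] | z.norm = (1 : ℕ)} =
      ({⟨1, 0⟩, ⟨-1, 0⟩, ⟨0, 1⟩, ⟨0, -1⟩} : Finset ℤ[i]) := by
    ext z
    simp only [Set.mem_ofPred_eq, Finset.coe_insert, Finset.coe_singleton, Set.mem_insert_iff,
      Set.mem_singleton_iff, norm_eq_sq_add_sq, Nat.cast_one, Zsqrtd.ext_iff]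
    constructor
    · intro h
      have hre : z.re ^ 2 ≤ 1 := by nlinarith [sq_nonneg z.im]
      have him : z.im ^ 2 ≤ 1 := by nlinarith [sq_nonneg z.re]
      rw [sq_le_one_iff_abs_le_one, abs_le] at hre him
      rcases hre with ⟨hre1, hre2⟩
      rcases him with ⟨him1, him2⟩
      interval_cases z.re <;> interval_cases z.im <;> simp_all
    · rintro (⟨h, h'⟩ | ⟨h, h'⟩ | ⟨h, h'⟩ | ⟨h, h'⟩) <;> simp [h, h']
  rw [normCount, this, Set.ncard_coe_finset]
  rfl

theorem normCount_eq_four_mul_chi4DivisorSum {N : ℕ} (hN : N ≠ 0) :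
    (normCount N : ℤ) = 4 * chi4DivisorSum N :=
  chi4Recursion_normCount.eq_of_apply_one_eq (chi4Recursion_chi4DivisorSum.const_mul 4)
    (by simp [normCount_one, isMultiplicative_chi4DivisorSum.map_one]) hN

theorem odd_re_and_odd_im_of_norm_emod_four {z : ℤ[i]} (h : z.norm % 4 = 2) :
    Odd z.re ∧ Odd z.im := by
  rw [norm_eq_sq_add_sq] at h
  rcases Int.even_or_odd' z.re with ⟨a, ha | ha⟩ <;>
    rcases Int.even_or_odd' z.im with ⟨b, hb | hb⟩ <;>
    rw [ha, hb] at h ⊢ <;> ring_nf at h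
  · omega
  · omega
  · omega
  · exact ⟨odd_two_mul_add_one a, odd_two_mul_add_one b⟩

theorem normCount_eight_mul_add_two (n : ℕ) :
    normCount (8 * n + 2) =
      4 * Nat.card {p : ℕ × ℕ // triangular p.1 + triangular p.2 = n} := by
  let e : (Bool × Bool) × {p : ℕ × ℕ // triangular p.1 + triangular p.2 = n} →
      {z : ℤ[i] | z.norm = (8 * n + 2 : ℕ)} := fun ⟨⟨s, t⟩, ⟨⟨x, y⟩, h⟩⟩ =>
    ⟨⟨signedOdd s x, signedOdd t y⟩, by
      rw [Set.mem_ofPred_eq, norm_eq_sq_add_sq, signedOdd_sq, signedOdd_sq, ← h]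
      push_cast; ring⟩
  have he : Function.Bijective e := by
    constructor
    · rintro ⟨⟨s, t⟩, ⟨⟨x, y⟩, h⟩⟩ ⟨⟨s', t'⟩, ⟨⟨x', y'⟩, h'⟩⟩ hst
      obtain ⟨rfl, rfl⟩ := signedOdd_inj.mp (congrArg (·.1.re) hst)
      obtain ⟨rfl, rfl⟩ := signedOdd_inj.mp (congrArg (·.1.im) hst)
      rfl
    · rintro ⟨⟨a, b⟩, hz⟩
      obtain ⟨ha, hb⟩ := odd_re_and_odd_im_of_norm_emod_four (by rw [hz.out]; omega)
      obtain ⟨s, x, rfl⟩ := exists_signedOdd_eq ha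
      obtain ⟨t, y, rfl⟩ := exists_signedOdd_eq hb
      have h := hz.out
      rw [norm_eq_sq_add_sq] at h
      dsimp only at h
      rw [signedOdd_sq, signedOdd_sq] at h
      exact ⟨⟨⟨s, t⟩, ⟨⟨x, y⟩, by dsimp only; omega⟩⟩, rfl⟩
  rw [normCount, ← Nat.card_coe_set_eq, ← Nat.card_congr (Equiv.ofBijective e he),
    Nat.card_prod, Nat.card_prod]
  simp

end GaussianInt

/-- Ewell's theorem: the number of representations of `n` as an ordered sum of
two triangular numbers equals `d₁(4n+1) - d₃(4n+1)`. -/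
theorem card_sum_two_triangular (n : ℕ) :
    (Nat.card {p : ℕ × ℕ // triangular p.1 + triangular p.2 = n} : ℤ) =
      (divCountMod4 (4 * n + 1) 1 : ℤ) - (divCountMod4 (4 * n + 1) 3 : ℤ) := by
  have hcount := GaussianInt.normCount_eight_mul_add_two n
  rw [show 8 * n + 2 = 2 * (4 * n + 1) by ring, GaussianInt.normCount_two_mul] at hcount
  have hjacobi := GaussianInt.normCount_eq_four_mul_chi4DivisorSum (N := 4 * n + 1) (by omega)
  rw [hcount, chi4DivisorSum_eq_divCountMod4_sub] at hjacobi
  push_cast at hjacobi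
  linarith
end

section
/- Every positive integer n ≡ 5 (mod 8) can be written as a sum of three or fewer squares; more precisely, writing n = 8m + 5, if m = t_x + 2y² + 4t_z then n = (2x+1)² + (4y)² + 4(2z+1)²; if m = t_x + 4t_y + 2z² then n = (2x+1)² + (4y+2)² + (4z)²; and if m = t_x + 4t_z then n = (2x+1)² + 4(2z+1)². -/
open Matrix

lemma eight_mul_triangular_add_one (k : ℕ) : 8 * triangular k + 1 = (2 * k + 1) ^ 2 := by
  have h : 2 * triangular k = k * (k + 1) := Nat.mul_div_cancel' (Nat.even_mul_succ_self k).two_dvd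
  nlinarith [h]

lemma Int.exists_four_mul_sq_add_mul_le (p : ℤ) {m : ℤ} (hm : 0 < m) :
    ∃ k, 4 * (p + m * k) ^ 2 ≤ m ^ 2 := by
  refine ⟨-((2 * p + m) / (2 * m)), ?_⟩
  have hr := Int.emod_nonneg (2 * p + m) (by positivity : 2 * m ≠ 0)
  have hr' := Int.emod_lt_of_pos (2 * p + m) (by positivity : 0 < 2 * m)
  have hdiv := Int.mul_ediv_add_emod (2 * p + m) (2 * m)
  nlinarith [mul_nonneg hr (by linarith : 0 ≤ 2 * m - (2 * p + m) % (2 * m))]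

namespace Matrix

section Congruence

variable {n : Type*} [Fintype n]

lemma posDef_iff_int {A : Matrix n n ℤ} :
    A.PosDef ↔ A.IsSymm ∧ ∀ v ≠ 0, 0 < v ⬝ᵥ A *ᵥ v := by
  simp [posDef_iff_dotProduct_mulVec]

lemma PosDef.isSymm {A : Matrix n n ℤ} (hA : A.PosDef) : A.IsSymm :=
  (posDef_iff_int.mp hA).1

lemma PosDef.exists_minimal [Nonempty n] {A : Matrix n n ℤ} (hA : A.PosDef) :
    ∃ v ≠ 0, ∀ w ≠ 0, v ⬝ᵥ A *ᵥ v ≤ w ⬝ᵥ A *ᵥ w := by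
  obtain ⟨v, hv, hmin⟩ := exists_minimalFor_of_wellFoundedLT (· ≠ 0)
    (fun v : n → ℤ ↦ (v ⬝ᵥ A *ᵥ v).toNat) ⟨1, one_ne_zero⟩
  refine ⟨v, hv, fun w hw ↦ ?_⟩
  have hvpos := (posDef_iff_int.mp hA).2 v hv
  have hwpos := (posDef_iff_int.mp hA).2 w hw
  by_contra! hlt
  have := hmin hw (show (w ⬝ᵥ A *ᵥ w).toNat ≤ (v ⬝ᵥ A *ᵥ v).toNat by omega)
  dsimp only at this
  omega

lemma PosDef.isUnit_of_dvd_of_minimal {A : Matrix n n ℤ} (hA : A.PosDef) {v : n → ℤ}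
    (hv : v ≠ 0) (hmin : ∀ w ≠ 0, v ⬝ᵥ A *ᵥ v ≤ w ⬝ᵥ A *ᵥ w) (d : ℤ) (hd : ∀ i, d ∣ v i) :
    IsUnit d := by
  choose w hw using hd
  have hvw : v = d • w := funext hw
  have hw0 : w ≠ 0 := by rintro rfl; simp_all
  have hval : v ⬝ᵥ A *ᵥ v = d ^ 2 * (w ⬝ᵥ A *ᵥ w) := by
    rw [hvw, mulVec_smul, smul_dotProduct, dotProduct_smul, smul_eq_mul, smul_eq_mul]; ring
  have hwpos := (posDef_iff_int.mp hA).2 w hw0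
  have hd2 : d ^ 2 ≤ 1 := le_of_mul_le_mul_right (by linarith [hmin w hw0]) hwpos
  have hd0 : d ≠ 0 := by rintro rfl; simp_all
  have := abs_le.mp ((sq_le_one_iff_abs_le_one d).mp hd2)
  rw [Int.isUnit_iff]; omega

lemma dotProduct_transpose_mul_mul_mulVec {R : Type*} [CommSemiring R] (A U : Matrix n n R)
    (w : n → R) : w ⬝ᵥ (Uᵀ * A * U) *ᵥ w = (U *ᵥ w) ⬝ᵥ A *ᵥ (U *ᵥ w) := by
  rw [← mulVec_mulVec, ← mulVec_mulVec, dotProduct_mulVec, vecMul_transpose]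

variable [DecidableEq n]

lemma transpose_mul_mul_apply_self {R : Type*} [CommSemiring R] (A U : Matrix n n R) (i : n) :
    (Uᵀ * A * U) i i = U.col i ⬝ᵥ A *ᵥ U.col i := by
  simpa [mulVec_single_one] using dotProduct_transpose_mul_mul_mulVec A U (Pi.single i 1)

lemma dotProduct_mulVec_eq_transpose_mul_mul {R : Type*} [CommRing R] (A : Matrix n n R)
    {U : Matrix n n R} (hU : U.det = 1) (v : n → R) :
    v ⬝ᵥ A *ᵥ v = (adjugate U *ᵥ v) ⬝ᵥ (Uᵀ * A * U) *ᵥ (adjugate U *ᵥ v) := by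
  rw [dotProduct_transpose_mul_mul_mulVec, mulVec_mulVec, mul_adjugate, hU, one_smul,
    one_mulVec]

lemma PosDef.exists_reduced {A : Matrix n n ℤ} (hA : A.PosDef) {v : n → ℤ}
    (hmin : ∀ w ≠ 0, v ⬝ᵥ A *ᵥ v ≤ w ⬝ᵥ A *ᵥ w) {i : n}
    (hcompl : ∃ U : Matrix n n ℤ, U.det = 1 ∧ U.col i = v) :
    ∃ B : Matrix n n ℤ, B.PosDef ∧ B.det = A.det ∧ B i i = v ⬝ᵥ A *ᵥ v ∧
      (∀ w ≠ 0, B i i ≤ w ⬝ᵥ B *ᵥ w) ∧ ∀ u, ∃ w, u ⬝ᵥ A *ᵥ u = w ⬝ᵥ B *ᵥ w := by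
  obtain ⟨U, hU, hcol⟩ := hcompl
  have hUunit : IsUnit U := (isUnit_iff_isUnit_det U).mpr (hU ▸ isUnit_one)
  have hcorner : (Uᵀ * A * U) i i = v ⬝ᵥ A *ᵥ v := by rw [transpose_mul_mul_apply_self, hcol]
  refine ⟨Uᵀ * A * U, ?_, by simp [det_mul, hU], hcorner, fun w hw ↦ ?_,
    fun u ↦ ⟨_, dotProduct_mulVec_eq_transpose_mul_mul A hU u⟩⟩
  · simpa [conjTranspose_eq_transpose_of_trivial] using
      hA.conjTranspose_mul_mul_same (mulVec_injective_of_isUnit hUunit)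
  · rw [hcorner, dotProduct_transpose_mul_mul_mulVec]
    refine hmin _ fun h ↦ hw (mulVec_injective_of_isUnit hUunit ?_)
    rw [h, mulVec_zero]

end Congruence

lemma exists_det_eq_one_col_eq_fin_two {v : Fin 2 → ℤ}
    (hv : ∀ d : ℤ, (∀ i, d ∣ v i) → IsUnit d) :
    ∃ U : Matrix (Fin 2) (Fin 2) ℤ, U.det = 1 ∧ U.col 0 = v := by
  obtain ⟨a, b, hab⟩ : IsCoprime (v 0) (v 1) :=
    IsRelPrime.isCoprime fun d h0 h1 ↦ hv d (Fin.forall_fin_two.mpr ⟨h0, h1⟩)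
  refine ⟨!![v 0, -b; v 1, a], ?_, ?_⟩
  · rw [det_fin_two_of]; linear_combination hab
  · ext i; fin_cases i <;> rfl

lemma exists_det_eq_one_col_eq_fin_three {v : Fin 3 → ℤ}
    (hv : ∀ d : ℤ, (∀ i, d ∣ v i) → IsUnit d) :
    ∃ U : Matrix (Fin 3) (Fin 3) ℤ, U.det = 1 ∧ U.col 0 = v := by
  obtain ⟨x, y, hx, hy, hxy⟩ := extract_gcd (v 0) (v 1)
  set g := gcd (v 0) (v 1)
  obtain ⟨a, b, hab⟩ : IsCoprime x y := (gcd_isUnit_iff x y).mp hxy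
  obtain ⟨c, d, hcd⟩ : IsCoprime g (v 2) := by
    refine IsRelPrime.isCoprime fun e hg h2 ↦ hv e ?_
    intro i; fin_cases i
    exacts [hg.trans (gcd_dvd_left _ _), hg.trans (gcd_dvd_right _ _), h2]
  refine ⟨!![v 0, -b, -d * x; v 1, a, -d * y; v 2, 0, c], ?_, ?_⟩
  · simp only [det_fin_three, of_apply, cons_val', cons_val_zero, cons_val_one, cons_val,
      cons_val_fin_one]
    rw [hx, hy]
    linear_combination (c * g + d * v 2) * hab + hcd
  · ext i; fin_cases i <;> rfl

lemma dotProduct_eq_head_add_tail {R : Type*} [Mul R] [AddCommMonoid R] {k : ℕ}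
    (u v : Fin (k + 1) → R) : u ⬝ᵥ v = u 0 * v 0 + vecTail u ⬝ᵥ vecTail v := by
  simp only [dotProduct, Fin.sum_univ_succ]; rfl

section CornerSchur

variable {R : Type*} [CommRing R] {k : ℕ}

/-- `A 0 0` times the Schur complement of the corner entry, which keeps it integral. -/
def cornerSchur (A : Matrix (Fin (k + 1)) (Fin (k + 1)) R) : Matrix (Fin k) (Fin k) R :=
  A 0 0 • A.submatrix Fin.succ Fin.succ - vecMulVec (vecTail (A 0)) (vecTail (A 0))

@[simp]
lemma cornerSchur_apply (A : Matrix (Fin (k + 1)) (Fin (k + 1)) R) (i j : Fin k) :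
    cornerSchur A i j = A 0 0 * A i.succ j.succ - A 0 i.succ * A 0 j.succ :=
  rfl

lemma mul_dotProduct_mulVec_eq_sq_add_cornerSchur {A : Matrix (Fin (k + 1)) (Fin (k + 1)) R}
    (hA : A.IsSymm) (v : Fin (k + 1) → R) :
    A 0 0 * (v ⬝ᵥ A *ᵥ v) = (A 0 ⬝ᵥ v) ^ 2 + vecTail v ⬝ᵥ cornerSchur A *ᵥ vecTail v := by
  set b := vecTail (A 0)
  set w := vecTail v
  have hrow : A 0 ⬝ᵥ v = A 0 0 * v 0 + b ⬝ᵥ w := dotProduct_eq_head_add_tail _ _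
  have hval : v ⬝ᵥ A *ᵥ v = A 0 0 * v 0 ^ 2 + 2 * v 0 * (b ⬝ᵥ w)
      + w ⬝ᵥ A.submatrix Fin.succ Fin.succ *ᵥ w := by
    have hcol : ∑ i : Fin k, v i.succ * (A i.succ 0 * v 0) = v 0 * (b ⬝ᵥ w) := by
      simp only [dotProduct, Finset.mul_sum, b, w, vecTail, Function.comp_apply]
      exact Finset.sum_congr rfl fun i _ ↦ by rw [hA.apply 0 i.succ]; ring
    simp only [dotProduct, mulVec, Fin.sum_univ_succ, mul_add, Finset.sum_add_distrib] at hcol ⊢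
    rw [hcol]
    simp only [b, w, vecTail, Function.comp_apply, submatrix_apply]
    ring
  have hschur : w ⬝ᵥ cornerSchur A *ᵥ w = A 0 0 * (w ⬝ᵥ A.submatrix Fin.succ Fin.succ *ᵥ w)
      - (b ⬝ᵥ w) ^ 2 := by
    simp [cornerSchur, sub_mulVec, smul_mulVec, vecMulVec_mulVec, dotProduct_comm w, sq, b]
  rw [hrow, hval, hschur]; ring

lemma isSymm_cornerSchur {A : Matrix (Fin (k + 1)) (Fin (k + 1)) R} (hA : A.IsSymm) :
    (cornerSchur A).IsSymm :=
  IsSymm.ext fun i j ↦ by simp [mul_comm, hA.apply i.succ j.succ]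

lemma mul_dotProduct_mulVec_fin_two {A : Matrix (Fin 2) (Fin 2) R}
    (hA : A.IsSymm) (v : Fin 2 → R) :
    A 0 0 * (v ⬝ᵥ A *ᵥ v) = (A 0 ⬝ᵥ v) ^ 2 + A.det * v 1 ^ 2 := by
  simp only [dotProduct, mulVec, Fin.sum_univ_two, det_fin_two, hA.apply 0 1]
  ring

lemma det_cornerSchur_fin_three {A : Matrix (Fin 3) (Fin 3) R} (hA : A.IsSymm) :
    (cornerSchur A).det = A 0 0 * A.det := by
  simp only [det_fin_two, det_fin_three, cornerSchur_apply, Fin.succ_zero_eq_one,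
    Fin.succ_one_eq_two, hA.apply 0 1, hA.apply 0 2, hA.apply 1 2]
  ring

end CornerSchur

lemma posDef_iff_cornerSchur {k : ℕ} {A : Matrix (Fin (k + 1)) (Fin (k + 1)) ℤ}
    (hA : A.IsSymm) : A.PosDef ↔ 0 < A 0 0 ∧ (cornerSchur A).PosDef := by
  have hsplit := mul_dotProduct_mulVec_eq_sq_add_cornerSchur hA
  rw [posDef_iff_int, posDef_iff_int]
  constructor
  · rintro ⟨-, hpos⟩
    have ha : 0 < A 0 0 := by simpa using hpos (Pi.single 0 1) (by simp)
    refine ⟨ha, isSymm_cornerSchur hA, fun w hw ↦ ?_⟩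
    -- the first coordinate of `v` is chosen to make the square in the splitting vanish
    have hv := hsplit (vecCons (-(vecTail (A 0) ⬝ᵥ w)) (A 0 0 • w))
    rw [dotProduct_cons, tail_cons, smul_dotProduct, dotProduct_smul, mulVec_smul,
      dotProduct_smul] at hv
    have hv0 : vecCons (-(vecTail (A 0) ⬝ᵥ w)) (A 0 0 • w) ≠ 0 := by
      intro h
      have := congrArg vecTail h
      rw [tail_cons] at this
      exact hw ((smul_eq_zero.mp this).resolve_left ha.ne')
    have := hpos _ hv0
    simp only [vecHead, smul_eq_mul] at hv
    nlinarith [mul_pos ha ha]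
  · rintro ⟨ha, -, hpos⟩
    refine ⟨hA, fun v hv ↦ ?_⟩
    have hv' := hsplit v
    suffices 0 < A 0 0 * (v ⬝ᵥ A *ᵥ v) by nlinarith
    by_cases hw : vecTail v = 0
    · have hv0 : v 0 ≠ 0 := fun h ↦ hv (by rw [← cons_head_tail v, hw]; simp [vecHead, h])
      rw [hv', dotProduct_eq_head_add_tail, hw]
      simp only [dotProduct_zero, add_zero, zero_dotProduct]
      positivity
    · rw [hv']
      positivity [hpos _ hw]

lemma posDef_fin_three_of_minors {A : Matrix (Fin 3) (Fin 3) ℤ} (hA : A.IsSymm)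
    (h₁ : 0 < A 0 0) (h₂ : 0 < A 0 0 * A 1 1 - A 0 1 ^ 2) (h₃ : 0 < A.det) : A.PosDef := by
  have hS := isSymm_cornerSchur hA
  refine (posDef_iff_cornerSchur hA).mpr ⟨h₁, (posDef_iff_cornerSchur hS).mpr ⟨?_, ?_⟩⟩
  · simpa [sq] using h₂
  refine (posDef_iff_cornerSchur (isSymm_cornerSchur hS)).mpr ⟨?_, ?_⟩
  · have h := det_cornerSchur_fin_three hA
    rw [det_fin_two, hS.apply 0 1] at h
    rw [cornerSchur_apply (cornerSchur A), Fin.succ_zero_eq_one, h]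
    positivity
  · exact posDef_iff_int.mpr
      ⟨IsSymm.ext fun i ↦ i.elim0, fun v hv ↦ (hv (Subsingleton.elim v 0)).elim⟩

lemma PosDef.three_mul_sq_le_four_mul_det {A : Matrix (Fin 2) (Fin 2) ℤ} (hA : A.PosDef)
    {v : Fin 2 → ℤ} (hv : v ≠ 0) (hmin : ∀ w ≠ 0, v ⬝ᵥ A *ᵥ v ≤ w ⬝ᵥ A *ᵥ w) :
    3 * (v ⬝ᵥ A *ᵥ v) ^ 2 ≤ 4 * A.det := by
  obtain ⟨B, hB, hBdet, hB00, hBmin, -⟩ := hA.exists_reduced hmin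
    (exists_det_eq_one_col_eq_fin_two (hA.isUnit_of_dvd_of_minimal hv hmin))
  rw [← hB00, ← hBdet]
  have hm : 0 < B 0 0 := hB.diag_pos
  obtain ⟨k, hk⟩ := Int.exists_four_mul_sq_add_mul_le (B 0 1) hm
  have hle := hBmin ![k, 1] (by simp)
  have hsplit := mul_dotProduct_mulVec_fin_two hB.isSymm ![k, 1]
  have hrow : B 0 ⬝ᵥ ![k, 1] = B 0 1 + B 0 0 * k := by
    simp [dotProduct, Fin.sum_univ_two]; ring
  rw [hrow, show ![k, 1] 1 = 1 from rfl, one_pow, mul_one] at hsplit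
  nlinarith [mul_le_mul_of_nonneg_left hle hm.le]

theorem PosDef.exists_sq_add_sq_of_det_eq_one {A : Matrix (Fin 2) (Fin 2) ℤ} (hA : A.PosDef)
    (hdet : A.det = 1) (u : Fin 2 → ℤ) : ∃ x y : ℤ, u ⬝ᵥ A *ᵥ u = x ^ 2 + y ^ 2 := by
  obtain ⟨v, hv, hmin⟩ := hA.exists_minimal
  obtain ⟨B, hB, hBdet, hB00, -, hBval⟩ := hA.exists_reduced hmin
    (exists_det_eq_one_col_eq_fin_two (hA.isUnit_of_dvd_of_minimal hv hmin))
  have hB1 : B 0 0 = 1 := by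
    have hherm := hA.three_mul_sq_le_four_mul_det hv hmin
    have hpos := (posDef_iff_int.mp hA).2 v hv
    rw [hdet] at hherm
    rw [hB00]
    nlinarith
  obtain ⟨w, hw⟩ := hBval u
  have hsplit := mul_dotProduct_mulVec_fin_two hB.isSymm w
  rw [hB1, hBdet, hdet, one_mul, one_mul] at hsplit
  exact ⟨B 0 ⬝ᵥ w, w 1, hw.trans hsplit⟩

lemma PosDef.corner_eq_one_of_det_eq_one {B : Matrix (Fin 3) (Fin 3) ℤ} (hB : B.PosDef)
    (hdet : B.det = 1) (hmin : ∀ w ≠ 0, B 0 0 ≤ w ⬝ᵥ B *ᵥ w) : B 0 0 = 1 := by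
  obtain ⟨hm, hS⟩ := (posDef_iff_cornerSchur hB.isSymm).mp hB
  obtain ⟨y, hy, hymin⟩ := hS.exists_minimal
  have hherm := hS.three_mul_sq_le_four_mul_det hy hymin
  rw [det_cornerSchur_fin_three hB.isSymm, hdet, mul_one] at hherm
  have hypos := (posDef_iff_int.mp hS).2 y hy
  obtain ⟨k, hk⟩ := Int.exists_four_mul_sq_add_mul_le (vecTail (B 0) ⬝ᵥ y) hm
  have hw : vecCons k y ≠ 0 := fun h ↦ hy (by simpa using congrArg vecTail h)
  have hle := hmin _ hw
  have hsplit := mul_dotProduct_mulVec_eq_sq_add_cornerSchur hB.isSymm (vecCons k y)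
  rw [dotProduct_cons, tail_cons] at hsplit
  simp only [vecHead] at hsplit
  -- `m² ≤ m Q(k, y) = (m k + c)² + S(y) ≤ m²/4 + S(y)` and Hermite's `3 S(y)² ≤ 4 m`
  have h1 : 3 * B 0 0 ^ 2 ≤ 4 * (y ⬝ᵥ cornerSchur B *ᵥ y) := by
    nlinarith [mul_le_mul_of_nonneg_left hle hm.le]
  have h2 : 27 * B 0 0 ^ 3 ≤ 64 := by nlinarith
  nlinarith

theorem PosDef.exists_sum_three_sq_of_det_eq_one {A : Matrix (Fin 3) (Fin 3) ℤ} (hA : A.PosDef)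
    (hdet : A.det = 1) (u : Fin 3 → ℤ) : ∃ x y z : ℤ, u ⬝ᵥ A *ᵥ u = x ^ 2 + y ^ 2 + z ^ 2 := by
  obtain ⟨v, hv, hmin⟩ := hA.exists_minimal
  obtain ⟨B, hB, hBdet, -, hBmin, hBval⟩ := hA.exists_reduced hmin
    (exists_det_eq_one_col_eq_fin_three (hA.isUnit_of_dvd_of_minimal hv hmin))
  rw [hdet] at hBdet
  have hB1 := hB.corner_eq_one_of_det_eq_one hBdet hBmin
  have hS := ((posDef_iff_cornerSchur hB.isSymm).mp hB).2
  have hSdet : (cornerSchur B).det = 1 := by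
    rw [det_cornerSchur_fin_three hB.isSymm, hB1, hBdet, one_mul]
  obtain ⟨w, hw⟩ := hBval u
  obtain ⟨y, z, hyz⟩ := hS.exists_sq_add_sq_of_det_eq_one hSdet (vecTail w)
  have hsplit := mul_dotProduct_mulVec_eq_sq_add_cornerSchur hB.isSymm w
  rw [hB1, one_mul, hyz] at hsplit
  exact ⟨B 0 ⬝ᵥ w, y, z, by rw [hw, hsplit, add_assoc]⟩

end Matrix

lemma exists_prime_mod_four_eq_one_dvd_add_one {n : ℕ} (hn : n % 4 = 1) :
    ∃ p : ℕ, ∃ r : ℤ, p.Prime ∧ p % 4 = 1 ∧ (p : ℤ) + 1 = n * r := by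
  have hcop : IsCoprime (2 * n - 1 : ℤ) (4 * n : ℕ) := ⟨2 * n - 1, 1 - n, by push_cast; ring⟩
  obtain ⟨p, -, hp, hpmod⟩ := Nat.forall_exists_prime_gt_and_zmodEq 0 (by omega) hcop
  obtain ⟨q, hq⟩ := (Int.ModEq.dvd hpmod.symm)
  push_cast at hq
  refine ⟨p, 4 * q + 2, hp, ?_, by linear_combination hq⟩
  have : (p : ℤ) % 4 = 1 := by
    rw [show (p : ℤ) = 2 * n - 1 + 4 * (n * q) by linear_combination hq]
    omega
  omega

lemma exists_dvd_sq_add {p n : ℕ} [Fact p.Prime] (hp : p % 4 = 1) (hn : n % 4 = 1)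
    (hdvd : (n : ℤ) ∣ p + 1) : ∃ u : ℤ, (p : ℤ) ∣ u ^ 2 + n := by
  have hpodd : Odd p := Nat.odd_iff.mpr (by omega)
  have hnodd : Odd n := Nat.odd_iff.mpr (by omega)
  have hmod : (p : ℤ) ≡ -1 [ZMOD n] :=
    Int.modEq_iff_dvd.mpr (by rw [show -1 - (p : ℤ) = -(p + 1) by ring, dvd_neg]; exact hdvd)
  have hJ : jacobiSym (-n) p = 1 := by
    rw [neg_eq_neg_one_mul, jacobiSym.mul_left, jacobiSym.at_neg_one hpodd,
      ZMod.χ₄_nat_one_mod_four hp, jacobiSym.quadratic_reciprocity_one_mod_four hn hpodd,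
      jacobiSym.mod_left' hmod, jacobiSym.at_neg_one hnodd, ZMod.χ₄_nat_one_mod_four hn, one_mul]
  obtain ⟨c, hc⟩ := ZMod.isSquare_of_jacobiSym_eq_one hJ
  refine ⟨c.val, (ZMod.intCast_zmod_eq_zero_iff_dvd _ p).mp ?_⟩
  push_cast
  rw [ZMod.natCast_zmod_val, sq, ← hc]
  push_cast; ring

theorem Nat.sum_three_sq_of_mod_four_eq_one {n : ℕ} (hn : n % 4 = 1) :
    ∃ a b c : ℕ, a ^ 2 + b ^ 2 + c ^ 2 = n := by
  obtain ⟨p, r, hp, hp4, hpr⟩ := exists_prime_mod_four_eq_one_dvd_add_one hn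
  have := Fact.mk hp
  obtain ⟨u, hu⟩ := exists_dvd_sq_add hp4 hn ⟨r, hpr⟩
  obtain ⟨T, hT⟩ : (p : ℤ) ∣ r * u ^ 2 + 1 := by
    obtain ⟨c, hc⟩ := hu
    exact ⟨r * c - 1, by linear_combination r * hc + hpr⟩
  -- leading minors `n`, `n r - 1 = p` and `p T - r u ^ 2 = 1`
  set A : Matrix (Fin 3) (Fin 3) ℤ := !![(n : ℤ), 1, u; 1, r, 0; u, 0, T]
  have hdet : A.det = 1 := by
    simp [A, det_fin_three]
    linear_combination -T * hpr - hT
  have hA : A.PosDef := by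
    refine posDef_fin_three_of_minors ?_ ?_ ?_ (by rw [hdet]; exact one_pos)
    · exact IsSymm.ext fun i j ↦ by fin_cases i <;> fin_cases j <;> rfl
    · simp [A]; omega
    · simp [A]
      linarith [hp.two_le]
  obtain ⟨x, y, z, hxyz⟩ := hA.exists_sum_three_sq_of_det_eq_one hdet (Pi.single 0 1)
  refine ⟨x.natAbs, y.natAbs, z.natAbs, ?_⟩
  simp [A] at hxyz
  zify
  simp only [sq_abs]
  linarith

/-- Every positive integer `n ≡ 5 (mod 8)` is a sum of three or fewer squares,
via explicit identities for `n = 8m + 5`. -/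
theorem sum_three_squares_of_mod_eight_five :
    (∀ m x y z : ℕ, m = triangular x + 2 * y ^ 2 + 4 * triangular z →
        8 * m + 5 = (2 * x + 1) ^ 2 + (4 * y) ^ 2 + 4 * (2 * z + 1) ^ 2) ∧
      (∀ m x y z : ℕ, m = triangular x + 4 * triangular y + 2 * z ^ 2 →
        8 * m + 5 = (2 * x + 1) ^ 2 + (4 * y + 2) ^ 2 + (4 * z) ^ 2) ∧
      (∀ m x z : ℕ, m = triangular x + 4 * triangular z →
        8 * m + 5 = (2 * x + 1) ^ 2 + 4 * (2 * z + 1) ^ 2) ∧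
      (∀ n : ℕ, 0 < n → n % 8 = 5 → ∃ x y z : ℕ, n = x ^ 2 + y ^ 2 + z ^ 2) := by
  refine ⟨fun m x y z hm ↦ ?_, fun m x y z hm ↦ ?_, fun m x z hm ↦ ?_, fun n _ hn ↦ ?_⟩
  · linarith [eight_mul_triangular_add_one x, eight_mul_triangular_add_one z]
  · linarith [eight_mul_triangular_add_one x, eight_mul_triangular_add_one y]
  · linarith [eight_mul_triangular_add_one x, eight_mul_triangular_add_one z]
  · obtain ⟨a, b, c, h⟩ := Nat.sum_three_sq_of_mod_four_eq_one (n := n) (by omega)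
    exact ⟨a, b, c, h.symm⟩
end
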